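/- Let λ and μ be partitions with at most k parts, with λ₁ = n−k and λ_k > 0, and let λ̄ = (n−k+1, λ₂, ..., λ_k), λ⁻ = (λ₂−1, ..., λ_k−1, 0). Then in R = ℤ[q, t₁,...,t_n][x]^{S_k}/J with torus indices mod n, s_{λ̄}(x|t)·s_μ(x|t) ≡ q · s_{λ⁻}(x|t)·s_μ(x|t) mod J. -/

import Mathlib

/-! The first row of the Jacobi–Trudi matrix of `λ̄` is `h_{n-k+1+j}(x | τ^{-j} t)`,
`0 ≤ j < k`. Splitting off the largest variable used gives the shift recurrence
`h_{m+1}(x | τ^{-s-1} t) = h_{m+1}(x | τ^{-s} t) + (t_{m+k-s} - t_{-s}) h_m(x | τ^{-s} t)`,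
and induction on `s` shows `h_m(x | τ^{-s} t) ≡ h_m(x | t)` mod `J` for `n-k+1+s ≤ m ≤ n`.
So modulo `J` that row is `(0, …, 0, (-1)^{k-1} q)`, and expanding along it leaves `q` times
the minor without the first row and last column. That minor is the Jacobi–Trudi matrix of `λ⁻`
with its last row `(0, …, 0, 1)` and last column deleted, so its determinant is `s_{λ⁻}`. -/

noncomputable section

/-- Coefficient ring `ℤ[q, t₁, …, tₙ]`: `none ↦ q`, `some i ↦ t_{i+1}`. -/
abbrev CoeffRing (n : ℕ) := MvPolynomial (Option (Fin n)) ℤ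

/-- The full polynomial ring in `x₁, …, x_k` over `ℤ[q, t₁, …, tₙ]`. -/
abbrev PolyRing (n k : ℕ) := MvPolynomial (Fin k) (CoeffRing n)

/-- The quantum parameter `q`. -/
def qvar (n : ℕ) : CoeffRing n := MvPolynomial.X none

/-- The torus weight `t_j`, with index reduced mod `n`
(representatives `{1, …, n}`). -/
def tvar (n : ℕ) (hn : 0 < n) (j : ℤ) : CoeffRing n :=
  MvPolynomial.X (some ⟨((j - 1) % (n : ℤ)).toNat, by
    have h0 : (0 : ℤ) < (n : ℤ) := by exact_mod_cast hn
    have h1 := Int.emod_nonneg (j - 1) h0.ne'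
    have h2 := Int.emod_lt_of_pos (j - 1) h0
    omega⟩)

/-- The factorial complete homogeneous polynomial `h_m(x | τ^{-s} t)`:
the factorial Schur polynomial of the one-row partition `(m)`, with torus
weights shifted by `τ^{-s}` (i.e. `t_i` replaced by `t_{i-s}`). -/
def hfac (n k : ℕ) (hn : 0 < n) (m : ℕ) (s : ℤ) : PolyRing n k :=
  ∑ f ∈ Finset.univ.filter (fun f : Fin m → Fin k => ∀ a b : Fin m, a ≤ b → f a ≤ f b),
    ∏ j : Fin m,
      (MvPolynomial.X (f j) -
        MvPolynomial.C (tvar n hn (((f j : ℕ) : ℤ) + 1 + ((j : ℕ) : ℤ) - s)))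

/-- `hfac` extended to integer degrees (zero in negative degrees). -/
def hzfac (n k : ℕ) (hn : 0 < n) (m s : ℤ) : PolyRing n k :=
  if 0 ≤ m then hfac n k hn m.toNat s else 0

/-- The quantum ideal
`J = ⟨h_{n-k+1}(x|t), …, h_{n-1}(x|t), h_n(x|t) + (-1)^k q⟩`. -/
def Jideal (n k : ℕ) (hn : 0 < n) : Ideal (PolyRing n k) :=
  Ideal.span
    (((fun m => hfac n k hn m 0) '' {m : ℕ | n - k + 1 ≤ m ∧ m ≤ n - 1}) ∪
      {hfac n k hn n 0 + (-1 : PolyRing n k) ^ k * MvPolynomial.C (qvar n)})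

/-- The factorial Schur polynomial, via the factorial Jacobi–Trudi formula
`s_λ(x|t) = det (h_{λ_i + j - i}(x | τ^{1-j} t))_{1 ≤ i,j ≤ k}`. -/
def sfac (n k : ℕ) (hn : 0 < n) (lam : Fin k → ℕ) : PolyRing n k :=
  Matrix.det (Matrix.of fun i j : Fin k =>
    hzfac n k hn ((lam i : ℤ) + ((j : ℕ) : ℤ) - ((i : ℕ) : ℤ)) ((j : ℕ) : ℤ))

theorem Fin.monotone_snoc_iff {α : Type*} [Preorder α] {m : ℕ} {g : Fin m → α} {v : α} :
    Monotone (Fin.snoc g v : Fin (m + 1) → α) ↔ Monotone g ∧ ∀ j, g j ≤ v := by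
  refine ⟨fun h => ⟨fun a b hab => ?_, fun j => ?_⟩, fun ⟨hg, hv⟩ a b hab => ?_⟩
  · simpa using h (Fin.castSucc_le_castSucc_iff.2 hab)
  · simpa using h (Fin.le_last j.castSucc)
  induction b using Fin.lastCases with
  | last => induction a using Fin.lastCases <;> simp [hv]
  | cast b =>
    induction a using Fin.lastCases with
    | last => exact absurd hab (by simp)
    | cast a => simpa using hg (by simpa using hab)

theorem Matrix.det_sub_det_mem_of_sub_mem {R ι : Type*} [CommRing R] [Fintype ι] [DecidableEq ι]
    {I : Ideal R} {A B : Matrix ι ι R} (h : ∀ i j, A i j - B i j ∈ I) : A.det - B.det ∈ I := by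
  rw [← Ideal.Quotient.eq, RingHom.map_det, RingHom.map_det]
  exact congrArg Matrix.det (Matrix.ext fun i j => Ideal.Quotient.eq.2 (h i j))

theorem Matrix.det_eq_of_row_eq_single {R : Type*} [CommRing R] {m : ℕ}
    (A : Matrix (Fin (m + 1)) (Fin (m + 1)) R) {i j : Fin (m + 1)} {c : R}
    (h : A i = Pi.single j c) :
    A.det = (-1) ^ (i + j : ℕ) * c * (A.submatrix i.succAbove j.succAbove).det := by
  rw [Matrix.det_succ_row A i,
    Finset.sum_eq_single j (fun j' _ hj' => by simp [h, hj']) (by simp), h, Pi.single_eq_same]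

open Finset

section FactorialH

variable {R : Type*} [CommRing R] {k : ℕ}

open Classical in
def boundedMonotone (k m L : ℕ) : Finset (Fin m → Fin k) :=
  {f | Monotone f ∧ ∀ j, (f j : ℕ) < L}

@[simp]
theorem mem_boundedMonotone {m L : ℕ} {f : Fin m → Fin k} :
    f ∈ boundedMonotone k m L ↔ Monotone f ∧ ∀ j, (f j : ℕ) < L := by
  simp [boundedMonotone]

/-- `h_m(y_0, …, y_{L-1} | a)`. -/
def factorialH (y : Fin k → R) (a : ℤ → R) (m L : ℕ) : R :=
  ∑ f ∈ boundedMonotone k m L, ∏ j, (y (f j) - a ((f j : ℕ) + (j : ℕ)))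

variable (y : Fin k → R) (a : ℤ → R)

@[simp]
theorem factorialH_zero (L : ℕ) : factorialH y a 0 L = 1 := by
  simp [factorialH, boundedMonotone, Subsingleton.monotone]

@[simp]
theorem factorialH_succ_zero (m : ℕ) : factorialH y a (m + 1) 0 = 0 := by
  simp [factorialH, boundedMonotone]

theorem factorialH_succ_succ (m L : ℕ) (hL : L < k) :
    factorialH y a (m + 1) (L + 1) =
      factorialH y a (m + 1) L + (y ⟨L, hL⟩ - a (L + m)) * factorialH y a m (L + 1) := by
  rw [factorialH, ← sum_filter_not_add_sum_filter _ (fun f => f (Fin.last m) = ⟨L, hL⟩)]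
  congr 1
  · refine sum_congr (Finset.ext fun f => ?_) fun _ _ => rfl
    simp only [mem_filter, mem_boundedMonotone, Fin.ext_iff]
    constructor
    · rintro ⟨⟨hf, hlt⟩, hlast⟩
      refine ⟨hf, fun j => (Fin.le_def.1 (hf (Fin.le_last j))).trans_lt ?_⟩
      exact lt_of_le_of_ne (Nat.lt_succ_iff.1 (hlt _)) hlast
    · rintro ⟨hf, hlt⟩
      exact ⟨⟨hf, fun j => (hlt j).trans (Nat.lt_succ_self L)⟩, (hlt _).ne⟩
  · rw [factorialH, mul_sum]
    refine sum_nbij' Fin.init (Fin.snoc · ⟨L, hL⟩) ?_ ?_ ?_ ?_ ?_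
    · intro f hf
      simp only [mem_boundedMonotone, mem_filter] at hf ⊢
      exact ⟨hf.1.1.comp Fin.strictMono_castSucc.monotone, fun j => hf.1.2 _⟩
    · intro g hg
      simp only [mem_filter, mem_boundedMonotone, Fin.monotone_snoc_iff] at hg ⊢
      refine ⟨⟨⟨hg.1, fun j => Fin.le_def.2 (Nat.lt_succ_iff.1 (hg.2 j))⟩, fun j => ?_⟩,
        by simp⟩
      induction j using Fin.lastCases <;> simp [hg.2]
    · intro f hf
      simp only [mem_filter] at hf
      simp only [← hf.2, Fin.snoc_init_self]
    · intro g _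
      simp
    · intro f hf
      simp only [mem_filter] at hf
      rw [Fin.prod_univ_castSucc, mul_comm, hf.2]
      rfl

theorem factorialH_shift (m L : ℕ) (hL : L ≤ k) :
    factorialH y (fun i => a (i - 1)) (m + 1) L =
      factorialH y a (m + 1) L + (a (m + L - 1) - a (-1)) * factorialH y a m L := by
  induction m generalizing L with
  | zero =>
    induction L with
    | zero => simp
    | succ L ih =>
      have hL' : L < k := hL
      have h' := factorialH_succ_succ y (fun i => a (i - 1)) 0 L hL'
      have h := factorialH_succ_succ y a 0 L hL'
      have ih := ih hL'.le
      simp only [factorialH_zero, mul_one] at h h' ih ⊢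
      linear_combination (norm := (push_cast; ring_nf)) h' - h + ih
  | succ m ihm =>
    induction L with
    | zero => simp
    | succ L ih =>
      have hL' : L < k := hL
      have h' := factorialH_succ_succ y (fun i => a (i - 1)) (m + 1) L hL'
      have h₁ := factorialH_succ_succ y a (m + 1) L hL'
      have h₀ := factorialH_succ_succ y a m L hL'
      linear_combination (norm := (push_cast; ring_nf)) h' - h₁ + ih hL'.le
        + (y ⟨L, hL'⟩ - a (L + m)) * ihm (L + 1) hL
        - (a (m + L) - a (-1)) * h₀

end FactorialH

open MvPolynomial

def jacobiTrudi (n k : ℕ) (hn : 0 < n) (lam : Fin k → ℕ) :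
    Matrix (Fin k) (Fin k) (PolyRing n k) :=
  Matrix.of fun i j => hzfac n k hn ((lam i : ℤ) + ((j : ℕ) : ℤ) - ((i : ℕ) : ℤ)) ((j : ℕ) : ℤ)

theorem sfac_eq_det_jacobiTrudi (n k : ℕ) (hn : 0 < n) (lam : Fin k → ℕ) :
    sfac n k hn lam = (jacobiTrudi n k hn lam).det :=
  rfl

section Quantum

variable {n k : ℕ} (hn : 0 < n)

theorem hfac_eq_factorialH (m : ℕ) (s : ℤ) :
    hfac n k hn m s = factorialH X (fun i => C (tvar n hn (i + 1 - s))) m k := by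
  refine sum_congr (Finset.ext fun f => ?_) fun f _ => prod_congr rfl fun j _ => ?_
  · simp [Monotone]
  · ring_nf

theorem hfac_zero (s : ℤ) : hfac n k hn 0 s = 1 := by
  rw [hfac_eq_factorialH, factorialH_zero]

theorem hfac_succ_shift (m : ℕ) (s : ℤ) :
    hfac n k hn (m + 1) (s + 1) = hfac n k hn (m + 1) s +
      (C (tvar n hn (m + k - s)) - C (tvar n hn (-s))) * hfac n k hn m s := by
  have hshift : (fun i : ℤ => (C (tvar n hn (i + 1 - (s + 1))) : PolyRing n k)) =
      fun i => (fun i : ℤ => (C (tvar n hn (i + 1 - s)) : PolyRing n k)) (i - 1) := by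
    funext i; ring_nf
  rw [hfac_eq_factorialH, hfac_eq_factorialH, hfac_eq_factorialH, hshift,
    factorialH_shift X (fun i => C (tvar n hn (i + 1 - s))) m k le_rfl,
    show (m + k - 1 + 1 - s : ℤ) = m + k - s by ring, show (-1 + 1 - s : ℤ) = -s by ring]

theorem hzfac_natCast (m : ℕ) (s : ℤ) : hzfac n k hn m s = hfac n k hn m s := by
  simp [hzfac]

theorem hzfac_of_neg {m : ℤ} (hm : m < 0) (s : ℤ) : hzfac n k hn m s = 0 :=
  if_neg hm.not_ge

theorem hfac_mem_Jideal {m : ℕ} (h₁ : n - k + 1 ≤ m) (h₂ : m ≤ n - 1) :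
    hfac n k hn m 0 ∈ Jideal n k hn :=
  Ideal.subset_span (Or.inl ⟨m, ⟨h₁, h₂⟩, rfl⟩)

theorem hfac_add_mem_Jideal :
    hfac n k hn n 0 + (-1) ^ k * C (qvar n) ∈ Jideal n k hn :=
  Ideal.subset_span (Or.inr rfl)

theorem hfac_sub_hfac_zero_mem_Jideal (s : ℕ) {m : ℕ} (h₁ : n - k + 1 + s ≤ m)
    (h₂ : m ≤ n) :
    hfac n k hn m s - hfac n k hn m 0 ∈ Jideal n k hn := by
  induction s generalizing m with
  | zero => simp
  | succ s ih =>
    obtain ⟨m, rfl⟩ : ∃ m', m = m' + 1 := ⟨m - 1, by omega⟩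
    set J := Jideal n k hn
    have hm : hfac n k hn m s ∈ J := by
      simpa using J.add_mem (ih (m := m) (by omega) (by omega))
        (hfac_mem_Jideal hn (m := m) (by omega) (by omega))
    have hrec := hfac_succ_shift (k := k) hn m s
    push_cast
    rw [hrec, add_sub_right_comm]
    exact J.add_mem (ih (by omega) h₂) (J.mul_mem_left _ hm)

theorem hfac_sub_single_mem_Jideal (hkn : k + 1 ≤ n) (j : Fin (k + 1)) :
    hfac n (k + 1) hn (n - k + j) j -
        (Pi.single (Fin.last k) ((-1) ^ k * C (qvar n)) : Fin (k + 1) → PolyRing n (k + 1)) j ∈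
      Jideal n (k + 1) hn := by
  set J := Jideal n (k + 1) hn
  have hsub : hfac n (k + 1) hn (n - k + j) j - hfac n (k + 1) hn (n - k + j) 0 ∈ J :=
    hfac_sub_hfac_zero_mem_Jideal hn j (by omega) (by omega)
  rcases eq_or_ne j (Fin.last k) with rfl | hj
  · have hm : n - k + (Fin.last k : ℕ) = n := by simp only [Fin.val_last]; omega
    rw [hm] at hsub ⊢
    rw [Pi.single_eq_same]
    convert J.add_mem hsub (hfac_add_mem_Jideal hn) using 1
    ring
  · have hjk : (j : ℕ) < k := Fin.val_lt_last hj
    have hzero : hfac n (k + 1) hn (n - k + j) 0 ∈ J := hfac_mem_Jideal hn (by omega) (by omega)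
    rw [Pi.single_eq_of_ne hj, sub_zero]
    simpa using J.add_mem hsub hzero

theorem sfac_sub_qvar_mul_sfac_mem_Jideal (hkn : k + 1 ≤ n) {lam lam' : Fin (k + 1) → ℕ}
    (h0 : lam 0 = n - k) (hsucc : ∀ i : Fin k, (lam' i.castSucc : ℤ) = lam i.succ - 1)
    (hlast : lam' (Fin.last k) = 0) :
    sfac n (k + 1) hn lam - C (qvar n) * sfac n (k + 1) hn lam' ∈ Jideal n (k + 1) hn := by
  set A := jacobiTrudi n (k + 1) hn lam
  set B := jacobiTrudi n (k + 1) hn lam'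
  set E : PolyRing n (k + 1) := (-1) ^ k * C (qvar n)
  have hA0 : ∀ j, A 0 j = hfac n (k + 1) hn (n - k + j) j := fun j => by
    rw [← hzfac_natCast]
    simp [A, jacobiTrudi, h0]
  have hA : A.det - (A.updateRow 0 (Pi.single (Fin.last k) E)).det ∈ Jideal n (k + 1) hn :=
    Matrix.det_sub_det_mem_of_sub_mem fun i j => by
      rcases eq_or_ne i 0 with rfl | hi
      · rw [Matrix.updateRow_self, hA0]
        exact hfac_sub_single_mem_Jideal hn hkn j
      · simp [Matrix.updateRow_ne hi]
  have hA' : (A.updateRow 0 (Pi.single (Fin.last k) E)).det =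
      C (qvar n) * (A.submatrix Fin.succ Fin.castSucc).det := by
    rw [Matrix.det_eq_of_row_eq_single _ (Matrix.updateRow_self ..),
      Matrix.submatrix_updateRow_succAbove, Fin.succAbove_zero, Fin.succAbove_last, Fin.val_zero,
      Fin.val_last, zero_add, ← mul_assoc, ← pow_add,
      (Even.add_self k).neg_one_pow (α := PolyRing n (k + 1)), one_mul]
  have hB : B.det = (B.submatrix Fin.castSucc Fin.castSucc).det := by
    rw [Matrix.det_eq_of_row_eq_single B (i := Fin.last k) (j := Fin.last k) (c := 1) ?_,
      Fin.succAbove_last, Fin.val_last,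
      (Even.add_self k).neg_one_pow (α := PolyRing n (k + 1)), one_mul, one_mul]
    funext j
    rcases eq_or_ne j (Fin.last k) with rfl | hj
    · simp [B, jacobiTrudi, hlast, hzfac, hfac_zero]
    · rw [Pi.single_eq_of_ne hj]
      refine hzfac_of_neg hn ?_ _
      have hjk : (j : ℕ) < k := Fin.val_lt_last hj
      simp only [hlast, Fin.val_last]
      omega
  have hAB : A.submatrix Fin.succ Fin.castSucc = B.submatrix Fin.castSucc Fin.castSucc := by
    refine Matrix.ext fun i j => ?_
    simp only [A, B, jacobiTrudi, Matrix.submatrix_apply, Matrix.of_apply, hsucc,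
      Fin.val_succ, Fin.val_castSucc]
    congr 1
    push_cast
    ring
  rw [sfac_eq_det_jacobiTrudi, sfac_eq_det_jacobiTrudi, hB, ← hAB, ← hA']
  exact hA

end Quantum

theorem sfac_bar_mul_eq_q_sfac_minus_mul_general (n k : ℕ) (hn : 0 < n) (hk : 0 < k)
    (hkn : k ≤ n) (lam mu : Fin k → ℕ) (hlam : Antitone lam)
    (hbot : 0 < lam ⟨k - 1, Nat.sub_lt hk one_pos⟩) :
    sfac n k hn (Function.update lam ⟨0, hk⟩ (n - k + 1)) * sfac n k hn mu -
      MvPolynomial.C (qvar n) *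
        (sfac n k hn (fun i => if h : (i : ℕ) + 1 < k then lam ⟨(i : ℕ) + 1, h⟩ - 1 else 0) *
          sfac n k hn mu)
      ∈ Jideal n k hn := by
  obtain ⟨k, rfl⟩ := Nat.exists_eq_add_one_of_ne_zero hk.ne'
  have hpos (i : Fin k) : 1 ≤ lam i.succ := hbot.trans_le (hlam (Fin.le_last _))
  have key := sfac_sub_qvar_mul_sfac_mem_Jideal hn hkn
    (lam := Function.update lam ⟨0, hk⟩ (n - (k + 1) + 1))
    (lam' := fun i => if h : (i : ℕ) + 1 < k + 1 then lam ⟨(i : ℕ) + 1, h⟩ - 1 else 0)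
    (by simp; omega) (fun i => by simp [Fin.succ_ne_zero]; exact Nat.cast_sub (hpos i)) (by simp)
  rw [← mul_assoc, ← sub_mul]
  exact Ideal.mul_mem_right _ _ key

/-- For partitions `λ, μ` with at most `k` parts, `λ₁ = n-k`, `λ_k > 0`, with
`λ̄ = (n-k+1, λ₂, …, λ_k)` and `λ⁻ = (λ₂-1, …, λ_k-1, 0)`:
`s_{λ̄}(x|t) ⬝ s_μ(x|t) ≡ q ⬝ s_{λ⁻}(x|t) ⬝ s_μ(x|t) mod J` (torus indices mod `n`). -/
theorem sfac_bar_mul_eq_q_sfac_minus_mul (n k : ℕ) (hn : 0 < n) (hk : 0 < k)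
    (hkn : k ≤ n) (lam mu : Fin k → ℕ) (hlam : Antitone lam) (hmu : Antitone mu)
    (htop : lam ⟨0, hk⟩ = n - k) (hbot : 0 < lam ⟨k - 1, Nat.sub_lt hk one_pos⟩) :
    sfac n k hn (Function.update lam ⟨0, hk⟩ (n - k + 1)) * sfac n k hn mu -
      MvPolynomial.C (qvar n) *
        (sfac n k hn (fun i => if h : (i : ℕ) + 1 < k then lam ⟨(i : ℕ) + 1, h⟩ - 1 else 0) *
          sfac n k hn mu)
      ∈ Jideal n k hn :=
  sfac_bar_mul_eq_q_sfac_minus_mul_general n k hn hk hkn lam mu hlam hbot
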